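/- If a balanced collision-free matrix over {-1,1} of size G×B exists with G, B even and G, B ≥ 6, then balanced collision-free matrices of size (G+4k)×(B+4k) exist for every natural number k. -/

import Mathlib

open Finset

def Collides {k : ℕ} (v w : Fin k → ℤ) : Prop := v = w ∨ v = -w

def DesignBalanced {G B : ℕ} (M : Matrix (Fin G) (Fin B) ℤ) : Prop :=
  (∀ g, ∑ b, M g b = 0) ∧ (∀ b, ∑ g, M g b = 0)

def CollisionFree {G B : ℕ} (M : Matrix (Fin G) (Fin B) ℤ) : Prop :=
  (∀ g g', g ≠ g' → ¬ Collides (M g) (M g')) ∧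
  (∀ b b', b ≠ b' → ¬ Collides (fun g => M g b) (fun g => M g b'))

/-!
Border `X` by `m` rows and `m` columns: new column `c` is the column `X · b₀` times `e c`, new
row `i` is the row `X g₀` times `e i`, and the corner is a sign matrix `R`. On the new columns an
old row is a multiple of `e` while no row of `R` is, so old and new rows cannot collide; two new
rows `i, j` colliding with sign `σ` would force `e i = σ e j` (look at column `b₀`) and
`R i = σ R j`, which the choice of `(e, R)` excludes. Transposing handles the columns, and for
`m = 4` a suitable symmetric `R` exists. Signs `±1` are the units of `ℤ`, so a collision reads
`v = σ • w` with `σ : ℤˣ`.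
-/

open Matrix

section Collides

variable {p q : ℕ}

lemma Collides.symm {v w : Fin p → ℤ} (h : Collides v w) : Collides w v := by
  rcases h with rfl | rfl
  exacts [Or.inl rfl, Or.inr (neg_neg w).symm]

lemma collides_iff_exists_units_smul {v w : Fin p → ℤ} :
    Collides v w ↔ ∃ σ : ℤˣ, v = σ • w := by
  constructor
  · rintro (rfl | rfl)
    exacts [⟨1, by simp⟩, ⟨-1, by simp⟩]
  · rintro ⟨σ, rfl⟩
    rcases Int.units_eq_one_or σ with rfl | rfl
    exacts [Or.inl (by simp), Or.inr (by simp)]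

lemma Collides.exists_units_smul_append {a c : Fin p → ℤ} {b d : Fin q → ℤ}
    (h : Collides (Fin.append a b) (Fin.append c d)) :
    ∃ σ : ℤˣ, a = σ • c ∧ b = σ • d := by
  obtain ⟨σ, hσ⟩ := collides_iff_exists_units_smul.1 h
  exact ⟨σ, funext fun i => by simpa using congrFun hσ (Fin.castAdd q i),
    funext fun i => by simpa using congrFun hσ (Fin.natAdd p i)⟩

end Collides

structure IsBorder {m : ℕ} (e : Fin m → ℤ) (R : Matrix (Fin m) (Fin m) ℤ) : Prop where
  isUnit_sign : ∀ i, IsUnit (e i)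
  isUnit_corner : ∀ i j, IsUnit (R i j)
  sum_sign : ∑ i, e i = 0
  sum_corner : ∀ i, ∑ j, R i j = 0
  not_collides_sign : ∀ i, ¬ Collides (R i) e
  not_collides_cons : ∀ i j, i ≠ j → ¬ Collides (vecCons (e i) (R i)) (vecCons (e j) (R j))

def bordered {G B m : ℕ} (X : Matrix (Fin G) (Fin B) ℤ) (e : Fin m → ℤ)
    (R : Matrix (Fin m) (Fin m) ℤ) (g₀ : Fin G) (b₀ : Fin B) :
    Matrix (Fin (G + m)) (Fin (B + m)) ℤ :=
  Fin.append (fun g => Fin.append (X g) (X g b₀ • e))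
    (fun i => Fin.append (e i • X g₀) (R i))

section Bordered

variable {G B m : ℕ} {X : Matrix (Fin G) (Fin B) ℤ} {e : Fin m → ℤ}
  {R : Matrix (Fin m) (Fin m) ℤ} {g₀ : Fin G} {b₀ : Fin B}

@[simp] lemma bordered_castAdd (g : Fin G) :
    bordered X e R g₀ b₀ (Fin.castAdd m g) = Fin.append (X g) (X g b₀ • e) :=
  Fin.append_left _ _ g

@[simp] lemma bordered_natAdd (i : Fin m) :
    bordered X e R g₀ b₀ (Fin.natAdd G i) = Fin.append (e i • X g₀) (R i) :=
  Fin.append_right _ _ i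

lemma transpose_bordered : (bordered X e R g₀ b₀)ᵀ = bordered Xᵀ e Rᵀ b₀ g₀ := by
  ext c r
  induction r using Fin.addCases <;> induction c using Fin.addCases <;>
    simp [mul_comm]

lemma isUnit_bordered (hX : ∀ g b, IsUnit (X g b)) (hR : IsBorder e R) (r : Fin (G + m))
    (c : Fin (B + m)) : IsUnit (bordered X e R g₀ b₀ r c) := by
  induction r using Fin.addCases <;> induction c using Fin.addCases <;>
    simp [hX, hR.isUnit_sign, hR.isUnit_corner]

lemma sum_bordered_row (hX : ∀ g, ∑ b, X g b = 0) (hR : IsBorder e R) (r : Fin (G + m)) :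
    ∑ c, bordered X e R g₀ b₀ r c = 0 := by
  induction r using Fin.addCases <;>
    simp [Fin.sum_univ_add, ← Finset.mul_sum, hX, hR.sum_sign, hR.sum_corner]

lemma not_collides_bordered_castAdd (hcf : ∀ g g', g ≠ g' → ¬ Collides (X g) (X g'))
    {g g' : Fin G} (hg : g ≠ g') :
    ¬ Collides (bordered X e R g₀ b₀ (Fin.castAdd m g))
      (bordered X e R g₀ b₀ (Fin.castAdd m g')) := by
  intro h
  simp only [bordered_castAdd] at h
  obtain ⟨σ, hσ, -⟩ := h.exists_units_smul_append
  exact hcf g g' hg (collides_iff_exists_units_smul.2 ⟨σ, hσ⟩)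

lemma not_collides_bordered_castAdd_natAdd {g : Fin G} (hg : IsUnit (X g b₀))
    (hR : IsBorder e R) (i : Fin m) :
    ¬ Collides (bordered X e R g₀ b₀ (Fin.castAdd m g))
      (bordered X e R g₀ b₀ (Fin.natAdd G i)) := by
  intro h
  simp only [bordered_castAdd, bordered_natAdd] at h
  obtain ⟨σ, -, hσ⟩ := h.exists_units_smul_append
  obtain ⟨u, hu⟩ := hg
  refine hR.not_collides_sign i (collides_iff_exists_units_smul.2 ⟨σ⁻¹ * u, ?_⟩)
  rw [mul_smul, Units.smul_def u, hu, hσ, inv_smul_smul]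

lemma not_collides_bordered_natAdd (hX₀ : X g₀ b₀ ≠ 0) (hR : IsBorder e R) {i j : Fin m}
    (hij : i ≠ j) :
    ¬ Collides (bordered X e R g₀ b₀ (Fin.natAdd G i))
      (bordered X e R g₀ b₀ (Fin.natAdd G j)) := by
  intro h
  simp only [bordered_natAdd] at h
  obtain ⟨σ, hleft, hright⟩ := h.exists_units_smul_append
  have hsign : e i = σ • e j := by
    refine mul_right_cancel₀ hX₀ ?_
    simpa [smul_mul_assoc] using congrFun hleft b₀
  exact hR.not_collides_cons i j hij
    (collides_iff_exists_units_smul.2 ⟨σ, by rw [smul_cons, ← hsign, ← hright]⟩)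

lemma not_collides_bordered_rows (hX : ∀ g b, IsUnit (X g b))
    (hcf : ∀ g g', g ≠ g' → ¬ Collides (X g) (X g')) (hR : IsBorder e R)
    {r r' : Fin (G + m)} (hr : r ≠ r') :
    ¬ Collides (bordered X e R g₀ b₀ r) (bordered X e R g₀ b₀ r') := by
  induction r using Fin.addCases with
  | left g => induction r' using Fin.addCases with
    | left g' => exact not_collides_bordered_castAdd hcf (ne_of_apply_ne _ hr)
    | right i => exact not_collides_bordered_castAdd_natAdd (hX g b₀) hR i
  | right i => induction r' using Fin.addCases with
    | left g => exact fun h => not_collides_bordered_castAdd_natAdd (hX g b₀) hR i h.symm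
    | right j => exact not_collides_bordered_natAdd (hX g₀ b₀).ne_zero hR (ne_of_apply_ne _ hr)

lemma designBalanced_bordered (hX : DesignBalanced X) (hR : IsBorder e R) (hRt : IsBorder e Rᵀ) :
    DesignBalanced (bordered X e R g₀ b₀) := by
  refine ⟨sum_bordered_row hX.1 hR, fun c => ?_⟩
  have := sum_bordered_row (X := Xᵀ) (g₀ := b₀) (b₀ := g₀) hX.2 hRt c
  rwa [← transpose_bordered] at this

lemma collisionFree_bordered (hX : ∀ g b, IsUnit (X g b)) (hcf : CollisionFree X)
    (hR : IsBorder e R) (hRt : IsBorder e Rᵀ) : CollisionFree (bordered X e R g₀ b₀) := by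
  refine ⟨fun r r' => not_collides_bordered_rows hX hcf.1 hR, fun c c' hc => ?_⟩
  have := not_collides_bordered_rows (X := Xᵀ) (g₀ := b₀) (b₀ := g₀) (fun b g => hX g b)
    hcf.2 hRt hc
  rwa [← transpose_bordered] at this

end Bordered

def signVector : Fin 4 → ℤ := ![1, -1, 1, -1]

def cornerMatrix : Matrix (Fin 4) (Fin 4) ℤ :=
  !![1, 1, -1, -1; 1, -1, -1, 1; -1, -1, 1, 1; -1, 1, 1, -1]

lemma transpose_cornerMatrix : cornerMatrixᵀ = cornerMatrix := by decide

lemma isBorder_cornerMatrix : IsBorder signVector cornerMatrix where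
  isUnit_sign := by simp only [Int.isUnit_iff]; decide
  isUnit_corner i := by simp only [Int.isUnit_iff]; fin_cases i <;> decide
  sum_sign := by decide
  sum_corner := by decide
  not_collides_sign i := by unfold Collides; fin_cases i <;> decide
  not_collides_cons i j := by unfold Collides; fin_cases i <;> fin_cases j <;> decide

lemma exists_balanced_collisionFree_add_four {G B : ℕ} (g₀ : Fin G) (b₀ : Fin B)
    {X : Matrix (Fin G) (Fin B) ℤ} (hX : ∀ g b, IsUnit (X g b)) (hbal : DesignBalanced X)
    (hcf : CollisionFree X) :
    ∃ Y : Matrix (Fin (G + 4)) (Fin (B + 4)) ℤ,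
      (∀ g b, IsUnit (Y g b)) ∧ DesignBalanced Y ∧ CollisionFree Y := by
  have hR := isBorder_cornerMatrix
  have hRt : IsBorder signVector cornerMatrixᵀ := transpose_cornerMatrix ▸ hR
  exact ⟨bordered X signVector cornerMatrix g₀ b₀, isUnit_bordered hX hR,
    designBalanced_bordered hbal hR hRt, collisionFree_bordered hX hcf hR hRt⟩

theorem balanced_collision_free_grows_general
    {G B : ℕ} (hG : 6 ≤ G) (hB : 6 ≤ B)
    (X : Matrix (Fin G) (Fin B) ℤ)
    (hpm : ∀ g b, X g b = 1 ∨ X g b = -1)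
    (hbal : DesignBalanced X) (hcf : CollisionFree X) :
    ∀ k : ℕ, ∃ Y : Matrix (Fin (G + 4 * k)) (Fin (B + 4 * k)) ℤ,
      (∀ g b, Y g b = 1 ∨ Y g b = -1) ∧ DesignBalanced Y ∧ CollisionFree Y := by
  simp only [← Int.isUnit_iff]
  intro k
  induction k with
  | zero => exact ⟨X, fun g b => Int.isUnit_iff.2 (hpm g b), hbal, hcf⟩
  | succ k ih =>
    obtain ⟨Y, hY, hYbal, hYcf⟩ := ih
    exact exists_balanced_collisionFree_add_four (G := G + 4 * k) (B := B + 4 * k)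
      ⟨0, by omega⟩ ⟨0, by omega⟩ hY hYbal hYcf

theorem balanced_collision_free_grows
    {G B : ℕ} (hGeven : Even G) (hBeven : Even B) (hG : 6 ≤ G) (hB : 6 ≤ B)
    (X : Matrix (Fin G) (Fin B) ℤ)
    (hpm : ∀ g b, X g b = 1 ∨ X g b = -1)
    (hbal : DesignBalanced X) (hcf : CollisionFree X) :
    ∀ k : ℕ, ∃ Y : Matrix (Fin (G + 4 * k)) (Fin (B + 4 * k)) ℤ,
      (∀ g b, Y g b = 1 ∨ Y g b = -1) ∧ DesignBalanced Y ∧ CollisionFree Y :=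
  balanced_collision_free_grows_general hG hB X hpm hbal hcf
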